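/- For every integer n ≥ 0, the total weight of the set T_n of weighted bicolored Motzkin paths equals R_n(t,q): ρ(T_n) = R_n(t,q) in ℤ[t,q]. -/

import Mathlib

open Finset Polynomial

/-- A step of a bicolored Motzkin path: up, down, straight level, wavy level. -/
inductive MStep where
  | U : MStep
  | D : MStep
  | L : MStep
  | W : MStep
deriving DecidableEq

/-- A weighted bicolored Motzkin path of length `n`: a sequence of steps together
with, for each step, the pair `(b, c)` of exponents of its monomial weight
`t^b q^c`. -/
structure WPath (n : ℕ) where
  step : Fin n → MStep
  wt : Fin n → ℕ × ℕ

/-- The height increment of a step. -/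
def dh : MStep → ℤ
  | MStep.U => 1
  | MStep.D => -1
  | MStep.L => 0
  | MStep.W => 0

/-- The height (of the starting point) of the `j`-th step; `ht μ n` is the final
height. -/
def ht {n : ℕ} (μ : WPath n) (j : ℕ) : ℤ :=
  ∑ k ∈ Finset.range j, if h : k < n then dh (μ.step ⟨k, h⟩) else 0

/-- The underlying path is a Motzkin path: stays weakly above the `x`-axis and
ends on it. -/
def IsMotzkin {n : ℕ} (μ : WPath n) : Prop :=
  (∀ j ≤ n, 0 ≤ ht μ j) ∧ ht μ n = 0

/-- The weight `ρ(μ)`: the product of the step weights `t^b q^c`, as an element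
of `ℤ[t,q]` (realized as `ℤ[q][t]`, `t` the outer variable). -/
noncomputable def rho {n : ℕ} (μ : WPath n) : Polynomial (Polynomial ℤ) :=
  ∏ j : Fin n, Polynomial.C (Polynomial.X ^ (μ.wt j).2) * Polynomial.X ^ (μ.wt j).1

/-- `[m]_q = 1 + q + ⋯ + q^(m-1)` in `ℤ[q]`. -/
noncomputable def qnat (m : ℕ) : Polynomial ℤ := ∑ i ∈ Finset.range m, Polynomial.X ^ i

/-- The `q`-derivative `D` on `ℤ[q][t]` (outer variable `t`, inner variable `q`),
the `ℤ[q]`-linear operator with `D(t^m) = [m]_q t^(m-1)`. -/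
noncomputable def opD (f : Polynomial (Polynomial ℤ)) : Polynomial (Polynomial ℤ) :=
  f.sum fun m c => Polynomial.C (c * qnat m) * Polynomial.X ^ (m - 1)

/-- The operator `U`: multiplication by `t` on `ℤ[q][t]`. -/
noncomputable def opU (f : Polynomial (Polynomial ℤ)) : Polynomial (Polynomial ℤ) :=
  Polynomial.X * f

/-- `R_n(t,q) = (D + DUU)^n 1`. -/
noncomputable def Rpoly (n : ℕ) : Polynomial (Polynomial ℤ) :=
  (fun f => opD f + opD (opU (opU f)))^[n] 1

/-- `Q_n(t,q) = (D + UDU)^n 1`. -/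
noncomputable def Qpoly (n : ℕ) : Polynomial (Polynomial ℤ) :=
  (fun f => opD f + opU (opD (opU f)))^[n] 1

/-- `μ ∈ T_n`: a weighted bicolored Motzkin path whose weights satisfy, at each
step of height `h`: up steps carry `q^c` with `c ≤ h` or `t²q^c` with
`2h+2 ≤ c ≤ 3h+2`; straight level steps carry `tq^c` with `h+1 ≤ c ≤ 2h+1`; wavy
level steps carry `tq^c` with `h ≤ c ≤ 2h`; down steps at height `h+1` carry
`q^c` with `c ≤ h+1`. -/
def Tcond {n : ℕ} (μ : WPath n) : Prop :=
  IsMotzkin μ ∧ ∀ j : Fin n,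
    (μ.step j = MStep.U →
      ((μ.wt j).1 = 0 ∧ ((μ.wt j).2 : ℤ) ≤ ht μ j) ∨
      ((μ.wt j).1 = 2 ∧ 2 * ht μ j + 2 ≤ ((μ.wt j).2 : ℤ) ∧
        ((μ.wt j).2 : ℤ) ≤ 3 * ht μ j + 2)) ∧
    (μ.step j = MStep.L →
      (μ.wt j).1 = 1 ∧ ht μ j + 1 ≤ ((μ.wt j).2 : ℤ) ∧ ((μ.wt j).2 : ℤ) ≤ 2 * ht μ j + 1) ∧
    (μ.step j = MStep.W →
      (μ.wt j).1 = 1 ∧ ht μ j ≤ ((μ.wt j).2 : ℤ) ∧ ((μ.wt j).2 : ℤ) ≤ 2 * ht μ j) ∧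
    (μ.step j = MStep.D →
      (μ.wt j).1 = 0 ∧ ((μ.wt j).2 : ℤ) ≤ ht μ j)

/-!
Let `S_n(H)` be the total weight of the weighted paths of `T_n`-type that start at height `H`
(instead of `0`) and end on the axis. Removing the first step gives the transfer recursion
`S_{n+1}(H) = Σ_s w_s(H) S_n(H + Δs)`, where `w_s(H)` is the total weight of a step `s` at height
`H`. The `q`-Hasse derivatives `ψ_k = D^k / [k]_q!` satisfy `ψ_k D = [k+1]_q ψ_{k+1}` and
`ψ_{k+1} U = q^{k+1} U ψ_{k+1} + ψ_k`, hence
`ψ_k (D + DUU) = w_U(k) ψ_{k+1} + (w_L(k) + w_W(k)) ψ_k + w_D(k) ψ_{k-1}`, the same recursion.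
As `ψ_k 1 = δ_{k,0}`, induction on `n` gives `S_n(k) = ψ_k R_n`, and `ψ_0` is the identity.
-/

lemma qnat_zero : qnat 0 = 0 := by simp [qnat]

lemma qnat_succ (m : ℕ) : qnat (m + 1) = qnat m + X ^ m := Finset.sum_range_succ _ _

lemma qnat_add (a b : ℕ) : qnat (a + b) = qnat a + X ^ a * qnat b := by
  simp [qnat, Finset.sum_range_add, Finset.mul_sum, pow_add]

lemma qnat_succ_ne_zero (m : ℕ) : qnat (m + 1) ≠ 0 := fun h => by
  have := congrArg (eval 1) h
  simp [qnat, eval_finsetSum] at this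
  omega

noncomputable def qfact : ℕ → ℤ[X]
  | 0 => 1
  | m + 1 => qnat (m + 1) * qfact m

lemma qfact_succ (m : ℕ) : qfact (m + 1) = qnat (m + 1) * qfact m := rfl

lemma qfact_ne_zero (m : ℕ) : qfact m ≠ 0 := by
  induction m with
  | zero => exact one_ne_zero
  | succ m ih => exact mul_ne_zero (qnat_succ_ne_zero m) ih

noncomputable def qbinom : ℕ → ℕ → ℤ[X]
  | _, 0 => 1
  | 0, _ + 1 => 0
  | m + 1, k + 1 => qbinom m k + X ^ (k + 1) * qbinom m (k + 1)

lemma qbinom_zero_right (m : ℕ) : qbinom m 0 = 1 := by cases m <;> rfl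

lemma qbinom_zero_succ (k : ℕ) : qbinom 0 (k + 1) = 0 := rfl

lemma qbinom_succ_succ (m k : ℕ) :
    qbinom (m + 1) (k + 1) = qbinom m k + X ^ (k + 1) * qbinom m (k + 1) := rfl

lemma qbinom_eq_zero_of_lt : ∀ {m k : ℕ}, m < k → qbinom m k = 0
  | 0, _ + 1, _ => rfl
  | m + 1, k + 1, h => by
    rw [qbinom_succ_succ, qbinom_eq_zero_of_lt (by omega : m < k),
      qbinom_eq_zero_of_lt (by omega : m < k + 1), mul_zero, add_zero]

lemma qbinom_self : ∀ m : ℕ, qbinom m m = 1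
  | 0 => rfl
  | m + 1 => by rw [qbinom_succ_succ, qbinom_self m, qbinom_eq_zero_of_lt m.lt_succ_self]; ring

lemma qbinom_add_mul_qfact : ∀ h k : ℕ, qbinom (h + k) h * (qfact h * qfact k) = qfact (h + k)
  | 0, k => by simp [qbinom_zero_right, qfact]
  | h + 1, 0 => by simp [qbinom_self, qfact]
  | h + 1, k + 1 => by
    have ih₁ := qbinom_add_mul_qfact h (k + 1)
    have ih₂ := qbinom_add_mul_qfact (h + 1) k
    rw [← add_assoc] at ih₁
    rw [add_right_comm] at ih₂
    rw [show h + 1 + (k + 1) = h + k + 1 + 1 by omega, qbinom_succ_succ, qfact_succ (h + k + 1),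
      show h + k + 1 + 1 = (h + 1) + (k + 1) by omega, qnat_add]
    calc (qbinom (h + k + 1) h + X ^ (h + 1) * qbinom (h + k + 1) (h + 1)) *
          (qfact (h + 1) * qfact (k + 1))
        = qnat (h + 1) * (qbinom (h + k + 1) h * (qfact h * qfact (k + 1)))
          + X ^ (h + 1) * qnat (k + 1) *
            (qbinom (h + k + 1) (h + 1) * (qfact (h + 1) * qfact k)) := by
          rw [qfact_succ h, qfact_succ k]; ring
      _ = _ := by rw [ih₁, ih₂]; ring

lemma qnat_succ_mul_qbinom_succ (m k : ℕ) :
    qnat (k + 1) * qbinom (m + 1) (k + 1) = qnat (m + 1) * qbinom m k := by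
  rcases lt_or_ge m k with hlt | hle
  · rw [qbinom_eq_zero_of_lt hlt, qbinom_eq_zero_of_lt (by omega : m + 1 < k + 1), mul_zero,
      mul_zero]
  obtain ⟨j, rfl⟩ := Nat.exists_eq_add_of_le hle
  apply mul_right_cancel₀ (mul_ne_zero (qfact_ne_zero k) (qfact_ne_zero j))
  have h₁ := qbinom_add_mul_qfact (k + 1) j
  have h₂ := qbinom_add_mul_qfact k j
  rw [show k + 1 + j = k + j + 1 by omega, qfact_succ (k + j), ← h₂, qfact_succ k] at h₁
  linear_combination h₁

noncomputable def monoWeight (w : ℕ × ℕ) : ℤ[X][X] := C (X ^ w.2) * X ^ w.1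

def IsAdmissibleWeight (s : MStep) (h : ℤ) (w : ℕ × ℕ) : Prop :=
  match s with
  | MStep.U => (w.1 = 0 ∧ (w.2 : ℤ) ≤ h) ∨ (w.1 = 2 ∧ 2 * h + 2 ≤ w.2 ∧ (w.2 : ℤ) ≤ 3 * h + 2)
  | MStep.L => w.1 = 1 ∧ h + 1 ≤ w.2 ∧ (w.2 : ℤ) ≤ 2 * h + 1
  | MStep.W => w.1 = 1 ∧ h ≤ w.2 ∧ (w.2 : ℤ) ≤ 2 * h
  | MStep.D => w.1 = 0 ∧ (w.2 : ℤ) ≤ h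

lemma isAdmissibleWeight_iff (s : MStep) (h : ℤ) (w : ℕ × ℕ) :
    IsAdmissibleWeight s h w ↔
      (s = MStep.U → (w.1 = 0 ∧ (w.2 : ℤ) ≤ h) ∨
        (w.1 = 2 ∧ 2 * h + 2 ≤ (w.2 : ℤ) ∧ (w.2 : ℤ) ≤ 3 * h + 2)) ∧
      (s = MStep.L → w.1 = 1 ∧ h + 1 ≤ (w.2 : ℤ) ∧ (w.2 : ℤ) ≤ 2 * h + 1) ∧
      (s = MStep.W → w.1 = 1 ∧ h ≤ (w.2 : ℤ) ∧ (w.2 : ℤ) ≤ 2 * h) ∧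
      (s = MStep.D → w.1 = 0 ∧ (w.2 : ℤ) ≤ h) := by
  cases s <;> simp [IsAdmissibleWeight]

lemma IsAdmissibleWeight.nonneg {s : MStep} {h : ℤ} {w : ℕ × ℕ} (hw : IsAdmissibleWeight s h w) :
    0 ≤ h := by
  cases s <;> simp only [IsAdmissibleWeight] at hw <;> omega

lemma finite_setOf_isAdmissibleWeight (s : MStep) (h : ℤ) :
    {w | IsAdmissibleWeight s h w}.Finite := by
  refine (Finset.range 3 ×ˢ Finset.range (3 * h.toNat + 3)).finite_toSet.subset
    fun w (hw : IsAdmissibleWeight s h w) => ?_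
  simp only [Finset.coe_product, Set.mem_prod, Finset.coe_range, Set.mem_Iio]
  cases s <;> simp only [IsAdmissibleWeight] at hw <;> omega

noncomputable def stepWeight (s : MStep) (h : ℤ) : ℤ[X][X] :=
  ∑ᶠ w ∈ {w | IsAdmissibleWeight s h w}, monoWeight w

lemma stepWeight_eq_sum {s : MStep} {h : ℤ} (S : Finset (ℕ × ℕ))
    (hS : ∀ w, IsAdmissibleWeight s h w ↔ w ∈ S) : stepWeight s h = ∑ w ∈ S, monoWeight w := by
  rw [stepWeight, show {w | IsAdmissibleWeight s h w} = S from Set.ext hS, finsum_mem_coe_finset]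

lemma sum_monoWeight_Ico (b lo len : ℕ) :
    ∑ w ∈ {b} ×ˢ Finset.Ico lo (lo + len), monoWeight w = C (X ^ lo * qnat len) * X ^ b := by
  simp [Finset.sum_Ico_eq_sum_range, monoWeight, qnat, pow_add,
    Finset.mul_sum, Finset.sum_mul]

lemma stepWeight_U (h : ℕ) :
    stepWeight MStep.U h = C (qnat (h + 1)) * (1 + C (X ^ (2 * h + 2)) * X ^ 2) := by
  rw [stepWeight_eq_sum ({0} ×ˢ Finset.Ico 0 (0 + (h + 1)) ∪
      {2} ×ˢ Finset.Ico (2 * h + 2) (2 * h + 2 + (h + 1))) (fun ⟨b, c⟩ => by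
      simp only [IsAdmissibleWeight, Finset.mem_union, Finset.mem_product, Finset.mem_singleton,
        Finset.mem_Ico]; omega),
    Finset.sum_union (Finset.disjoint_product.2 (.inl (by simp))), sum_monoWeight_Ico,
    sum_monoWeight_Ico]
  simp only [map_mul, pow_zero, map_one]
  ring

lemma stepWeight_L (h : ℕ) : stepWeight MStep.L h = C (X ^ (h + 1) * qnat (h + 1)) * X := by
  rw [stepWeight_eq_sum ({1} ×ˢ Finset.Ico (h + 1) (h + 1 + (h + 1))) (fun ⟨b, c⟩ => by
      simp only [IsAdmissibleWeight, Finset.mem_product, Finset.mem_singleton, Finset.mem_Ico];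
      omega),
    sum_monoWeight_Ico, pow_one]

lemma stepWeight_W (h : ℕ) : stepWeight MStep.W h = C (X ^ h * qnat (h + 1)) * X := by
  rw [stepWeight_eq_sum ({1} ×ˢ Finset.Ico h (h + (h + 1))) (fun ⟨b, c⟩ => by
      simp only [IsAdmissibleWeight, Finset.mem_product, Finset.mem_singleton, Finset.mem_Ico];
      omega),
    sum_monoWeight_Ico, pow_one]

lemma stepWeight_D (h : ℕ) : stepWeight MStep.D h = C (qnat (h + 1)) := by
  rw [stepWeight_eq_sum ({0} ×ˢ Finset.Ico 0 (0 + (h + 1))) (fun ⟨b, c⟩ => by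
      simp only [IsAdmissibleWeight, Finset.mem_product, Finset.mem_singleton, Finset.mem_Ico];
      omega),
    sum_monoWeight_Ico]
  simp only [pow_zero, one_mul, mul_one]

/-- The `q`-analogue of `Polynomial.hasseDeriv` in the variable `t`: it sends `t ^ m` to
`qbinom m k * t ^ (m - k)`, so that `[k]_q! • qHasseDeriv k = opD ^ k`. -/
noncomputable def qHasseDeriv (k : ℕ) (f : ℤ[X][X]) : ℤ[X][X] :=
  f.sum fun m c => C (c * qbinom m k) * X ^ (m - k)

lemma qHasseDeriv_monomial (k m : ℕ) (a : ℤ[X]) :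
    qHasseDeriv k (monomial m a) = C (a * qbinom m k) * X ^ (m - k) :=
  sum_monomial_index _ _ (by simp)

lemma qHasseDeriv_add (k : ℕ) (f g : ℤ[X][X]) :
    qHasseDeriv k (f + g) = qHasseDeriv k f + qHasseDeriv k g :=
  sum_add_index _ _ _ (by simp) (fun _ _ _ => by rw [add_mul, map_add, add_mul])

lemma qHasseDeriv_zero (f : ℤ[X][X]) : qHasseDeriv 0 f = f := by
  conv_rhs => rw [← f.sum_C_mul_X_pow_eq]
  simp only [qHasseDeriv, qbinom_zero_right, mul_one, Nat.sub_zero]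

lemma qHasseDeriv_one (k : ℕ) : qHasseDeriv k 1 = if k = 0 then 1 else 0 := by
  rw [← monomial_zero_one, qHasseDeriv_monomial]
  cases k <;> simp [qbinom_zero_right, qbinom_zero_succ]

lemma opD_monomial (m : ℕ) (a : ℤ[X]) : opD (monomial m a) = C (a * qnat m) * X ^ (m - 1) :=
  sum_monomial_index _ _ (by simp)

lemma opD_add (f g : ℤ[X][X]) : opD (f + g) = opD f + opD g :=
  sum_add_index _ _ _ (by simp) (fun _ _ _ => by rw [add_mul, map_add, add_mul])

lemma qHasseDeriv_opD (k : ℕ) (f : ℤ[X][X]) :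
    qHasseDeriv k (opD f) = C (qnat (k + 1)) * qHasseDeriv (k + 1) f := by
  induction f using Polynomial.induction_on' with
  | add f g hf hg => rw [opD_add, qHasseDeriv_add, hf, hg, qHasseDeriv_add, mul_add]
  | monomial m a =>
    rw [opD_monomial, C_mul_X_pow_eq_monomial, qHasseDeriv_monomial, qHasseDeriv_monomial]
    cases m with
    | zero => simp [qnat_zero, qbinom_zero_succ]
    | succ m =>
      rw [Nat.add_sub_cancel, Nat.add_sub_add_right, mul_assoc a, ← qnat_succ_mul_qbinom_succ]
      simp only [map_mul]; ring

lemma qHasseDeriv_succ_opU (k : ℕ) (f : ℤ[X][X]) :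
    qHasseDeriv (k + 1) (opU f) =
      C (X ^ (k + 1)) * X * qHasseDeriv (k + 1) f + qHasseDeriv k f := by
  induction f using Polynomial.induction_on' with
  | add f g hf hg =>
    simp only [opU, mul_add] at hf hg ⊢
    rw [qHasseDeriv_add, hf, hg, qHasseDeriv_add, qHasseDeriv_add]
    ring
  | monomial m a =>
    rw [opU, X_mul_monomial, qHasseDeriv_monomial, qHasseDeriv_monomial, qHasseDeriv_monomial,
      qbinom_succ_succ, Nat.add_sub_add_right]
    rcases le_or_gt m k with hle | hlt
    · rw [qbinom_eq_zero_of_lt (by omega : m < k + 1)]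
      simp
    · obtain ⟨j, rfl⟩ := Nat.exists_eq_add_of_lt hlt
      rw [show k + j + 1 - k = j + 1 by omega, show k + j + 1 - (k + 1) = j by omega]
      simp only [map_mul, map_add, map_pow, mul_add]
      ring

lemma qHasseDeriv_zero_opD_add (f : ℤ[X][X]) :
    qHasseDeriv 0 (opD f + opD (opU (opU f))) =
      stepWeight MStep.U (0 : ℕ) * qHasseDeriv 1 f +
        (stepWeight MStep.L (0 : ℕ) + stepWeight MStep.W (0 : ℕ)) * qHasseDeriv 0 f := by
  rw [qHasseDeriv_add, qHasseDeriv_opD, qHasseDeriv_opD, qHasseDeriv_succ_opU,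
    qHasseDeriv_succ_opU, qHasseDeriv_zero (opU f), qHasseDeriv_zero f, opU, stepWeight_U,
    stepWeight_L, stepWeight_W]
  simp only [zero_add, qnat_succ, qnat_zero, pow_zero, pow_one, mul_zero, map_mul, map_pow, map_one]
  ring

lemma qHasseDeriv_succ_opD_add (k : ℕ) (f : ℤ[X][X]) :
    qHasseDeriv (k + 1) (opD f + opD (opU (opU f))) =
      stepWeight MStep.U (k + 1 : ℕ) * qHasseDeriv (k + 2) f +
        (stepWeight MStep.L (k + 1 : ℕ) + stepWeight MStep.W (k + 1 : ℕ)) * qHasseDeriv (k + 1) f +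
          stepWeight MStep.D (k + 1 : ℕ) * qHasseDeriv k f := by
  rw [qHasseDeriv_add, qHasseDeriv_opD, qHasseDeriv_opD, qHasseDeriv_succ_opU,
    qHasseDeriv_succ_opU, qHasseDeriv_succ_opU, stepWeight_U, stepWeight_L, stepWeight_W,
    stepWeight_D]
  simp only [map_mul, map_pow]
  ring

lemma finsum_mem_mul_finsum_mem {α β R : Type*} [NonUnitalNonAssocSemiring R] {A : Set α}
    {B : Set β} (hA : A.Finite) (hB : B.Finite) (f : α → R) (g : β → R) :
    (∑ᶠ a ∈ A, f a) * ∑ᶠ b ∈ B, g b = ∑ᶠ p ∈ A ×ˢ B, f p.1 * g p.2 := by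
  lift A to Finset α using hA
  lift B to Finset β using hB
  rw [← Finset.coe_product, finsum_mem_coe_finset, finsum_mem_coe_finset, finsum_mem_coe_finset,
    Finset.sum_mul_sum, Finset.sum_product]

instance : Fintype MStep :=
  ⟨{MStep.U, MStep.D, MStep.L, MStep.W}, fun s => by cases s <;> decide⟩

lemma MStep.sum_univ {M : Type*} [AddCommMonoid M] (f : MStep → M) :
    ∑ s, f s = f MStep.U + f MStep.D + f MStep.L + f MStep.W := by
  simp [Finset.univ, Fintype.elems, add_assoc]

namespace WPath

def cons {n : ℕ} (s : MStep) (w : ℕ × ℕ) (ν : WPath n) : WPath (n + 1) :=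
  ⟨Fin.cons s ν.step, Fin.cons w ν.wt⟩

def tail {n : ℕ} (μ : WPath (n + 1)) : WPath n := ⟨Fin.tail μ.step, Fin.tail μ.wt⟩

lemma cons_self_tail {n : ℕ} (μ : WPath (n + 1)) : cons (μ.step 0) (μ.wt 0) μ.tail = μ := by
  simp [cons, tail, Fin.cons_self_tail]

lemma cons_inj {n : ℕ} {s s' : MStep} {w w' : ℕ × ℕ} {ν ν' : WPath n} :
    cons s w ν = cons s' w' ν' ↔ s = s' ∧ w = w' ∧ ν = ν' := by
  cases ν; cases ν'
  simp only [cons, mk.injEq, Fin.cons_inj]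
  tauto

instance : Unique (WPath 0) where
  default := ⟨Fin.elim0, Fin.elim0⟩
  uniq μ := by cases μ; congr <;> funext j <;> exact j.elim0

lemma rho_cons {n : ℕ} (s : MStep) (w : ℕ × ℕ) (ν : WPath n) :
    rho (cons s w ν) = monoWeight w * rho ν :=
  Fin.prod_univ_succ _

lemma ht_zero {n : ℕ} (μ : WPath n) : ht μ 0 = 0 := by simp [ht]

lemma ht_cons_succ {n : ℕ} (s : MStep) (w : ℕ × ℕ) (ν : WPath n) {j : ℕ} (hj : j ≤ n) :
    ht (cons s w ν) (j + 1) = dh s + ht ν j := by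
  rw [ht, Finset.sum_range_succ', ht, dif_pos n.succ_pos, add_comm]
  congr 1
  refine Finset.sum_congr rfl fun k hk => ?_
  rw [Finset.mem_range] at hk
  rw [dif_pos (by omega), dif_pos (by omega)]
  rfl

-- No condition `0 ≤ H + ht μ j` is needed: admissible weights exist only at heights `≥ 0`.
def pathsFrom (n : ℕ) (H : ℤ) : Set (WPath n) :=
  {μ | H + ht μ n = 0 ∧ ∀ j : Fin n, IsAdmissibleWeight (μ.step j) (H + ht μ j) (μ.wt j)}

lemma cons_mem_pathsFrom {n : ℕ} {H : ℤ} {s : MStep} {w : ℕ × ℕ} {ν : WPath n} :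
    cons s w ν ∈ pathsFrom (n + 1) H ↔ IsAdmissibleWeight s H w ∧ ν ∈ pathsFrom n (H + dh s) := by
  have hsucc (j : Fin n) : H + ht (cons s w ν) (j.succ : ℕ) = H + dh s + ht ν j := by
    rw [Fin.val_succ, ht_cons_succ _ _ _ j.is_lt.le, add_assoc]
  simp only [pathsFrom, Set.mem_ofPred_eq, Fin.forall_fin_succ, hsucc, ht_cons_succ _ _ _ le_rfl,
    Fin.val_zero, ht_zero, add_zero, ← add_assoc]
  exact ⟨fun ⟨hend, h0, hj⟩ => ⟨h0, hend, hj⟩, fun ⟨h0, hend, hj⟩ => ⟨hend, h0, hj⟩⟩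

lemma pathsFrom_succ (n : ℕ) (H : ℤ) :
    pathsFrom (n + 1) H = ⋃ s, (fun p : (ℕ × ℕ) × WPath n => cons s p.1 p.2) ''
      ({w | IsAdmissibleWeight s H w} ×ˢ pathsFrom n (H + dh s)) := by
  ext μ
  simp only [Set.mem_iUnion, Set.mem_image]
  constructor
  · intro hμ
    rw [← cons_self_tail μ, cons_mem_pathsFrom] at hμ
    exact ⟨μ.step 0, (μ.wt 0, μ.tail), hμ, cons_self_tail μ⟩
  · rintro ⟨s, ⟨w, ν⟩, hwν, rfl⟩
    exact cons_mem_pathsFrom.2 hwν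

lemma pathsFrom_finite (n : ℕ) (H : ℤ) : (pathsFrom n H).Finite := by
  induction n generalizing H with
  | zero => exact Set.toFinite _
  | succ n ih =>
    rw [pathsFrom_succ]
    exact Set.finite_iUnion fun s =>
      ((finite_setOf_isAdmissibleWeight s H).prod (ih _)).image _

lemma pathsFrom_of_neg {n : ℕ} {H : ℤ} (hH : H < 0) : pathsFrom n H = ∅ := by
  refine Set.eq_empty_of_forall_notMem fun μ ⟨hend, hsteps⟩ => ?_
  cases n with
  | zero => rw [ht_zero] at hend; omega
  | succ n =>
    have := (hsteps 0).nonneg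
    rw [Fin.val_zero, ht_zero] at this
    omega

lemma finsum_pathsFrom_zero (H : ℤ) :
    ∑ᶠ μ ∈ pathsFrom 0 H, rho μ = if H = 0 then 1 else 0 := by
  split_ifs with hH
  · subst hH
    have huniv : pathsFrom 0 0 = Set.univ :=
      Set.eq_univ_of_forall fun μ => ⟨by rw [ht_zero, add_zero], fun j => j.elim0⟩
    rw [huniv, finsum_mem_univ, finsum_unique]
    exact Finset.prod_empty
  · rw [Set.eq_empty_of_forall_notMem fun μ (hμ : μ ∈ pathsFrom 0 H) =>
      hH (by rw [← add_zero H, ← ht_zero μ]; exact hμ.1), finsum_mem_empty]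

lemma disjoint_image_cons {n : ℕ} {s s' : MStep} (hss' : s ≠ s') (A B : Set ((ℕ × ℕ) × WPath n)) :
    Disjoint ((fun p => cons s p.1 p.2) '' A) ((fun p => cons s' p.1 p.2) '' B) :=
  Set.disjoint_left.2 fun _ ⟨_, _, hp⟩ ⟨_, _, hp'⟩ => hss' (cons_inj.1 (hp.trans hp'.symm)).1

lemma finsum_pathsFrom_succ (n : ℕ) (H : ℤ) :
    ∑ᶠ μ ∈ pathsFrom (n + 1) H, rho μ =
      ∑ s, stepWeight s H * ∑ᶠ ν ∈ pathsFrom n (H + dh s), rho ν := by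
  rw [pathsFrom_succ, finsum_mem_iUnion (fun s s' h => disjoint_image_cons h _ _)
      fun s => ((finite_setOf_isAdmissibleWeight s H).prod (pathsFrom_finite n _)).image _,
    finsum_eq_sum_of_fintype]
  refine Finset.sum_congr rfl fun s _ => ?_
  rw [finsum_mem_image fun p _ p' _ h => Prod.ext (cons_inj.1 h).2.1 (cons_inj.1 h).2.2,
    stepWeight, finsum_mem_mul_finsum_mem (finite_setOf_isAdmissibleWeight s H)
      (pathsFrom_finite n _)]
  simp only [rho_cons]

end WPath

lemma Rpoly_succ (n : ℕ) : Rpoly (n + 1) = opD (Rpoly n) + opD (opU (opU (Rpoly n))) :=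
  Function.iterate_succ_apply' _ _ _

open WPath in
theorem finsum_pathsFrom_eq_qHasseDeriv_Rpoly (n k : ℕ) :
    ∑ᶠ μ ∈ pathsFrom n k, rho μ = qHasseDeriv k (Rpoly n) := by
  induction n generalizing k with
  | zero => simp [finsum_pathsFrom_zero, qHasseDeriv_one, Rpoly]
  | succ n ih =>
    rw [finsum_pathsFrom_succ, MStep.sum_univ, Rpoly_succ]
    simp only [dh, add_zero, ← Nat.cast_succ, ih]
    cases k with
    | zero =>
      rw [qHasseDeriv_zero_opD_add, pathsFrom_of_neg (by norm_num), finsum_mem_empty]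
      ring
    | succ k =>
      rw [qHasseDeriv_succ_opD_add, show ((k + 1 : ℕ) : ℤ) + -1 = k by push_cast; ring, ih]
      ring

lemma setOf_tcond_eq_pathsFrom (n : ℕ) : {μ : WPath n | Tcond μ} = WPath.pathsFrom n 0 := by
  ext μ
  simp only [Set.mem_ofPred_eq, Tcond, IsMotzkin, WPath.pathsFrom, zero_add,
    ← isAdmissibleWeight_iff]
  refine ⟨fun ⟨⟨_, hend⟩, hadm⟩ => ⟨hend, hadm⟩, fun ⟨hend, hadm⟩ => ⟨⟨fun j hj => ?_, hend⟩, hadm⟩⟩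
  rcases hj.lt_or_eq with hj | rfl
  · exact (hadm ⟨j, hj⟩).nonneg
  · exact hend.ge

/-- Proposition 2.2: for `n ≥ 0`, `ρ(T_n) = R_n(t,q)` in `ℤ[t,q]`. -/
theorem statement10 (n : ℕ) :
    (∑ᶠ μ ∈ {μ : WPath n | Tcond μ}, rho μ) = Rpoly n := by
  simpa [setOf_tcond_eq_pathsFrom, qHasseDeriv_zero] using
    finsum_pathsFrom_eq_qHasseDeriv_Rpoly n 0
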